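/- arXiv:1304.1588 — 3 statements merged into one kernel-verified Lean document; each statement's English description precedes it below -/
import Mathlib

section
/- Assume κ_1 μ_1 + κ_2 μ_2 = κ_3 conj(μ_3) with κ_1, κ_2, κ_3 > 0, and let A = diag(κ_1, κ_2, κ_3). Then for all z ∈ ℂ³, ⟨F(z), Az⟩_{ℂ³} = Σ_{j=1}^{3} κ_j λ_j |z_j|³ + 2κ_3 Re( conj(μ_3 z_1 z_2) z_3 ); in particular Im⟨F(z), Az⟩_{ℂ³} = Σ_{j=1}^{3} κ_j (Im λ_j) |z_j|³, which is ≤ 0 for all z ∈ ℂ³ whenever Im λ_j ≤ 0 for j = 1,2,3. -/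
open MeasureTheory Filter Complex

noncomputable section

/-- The underlying space `ℝ²`. -/
abbrev V2 : Type := EuclideanSpace ℝ (Fin 2)

/-- Fourier transform on `ℝ²` with the normalization `f̂(ξ) = (2π)⁻¹ ∫ e^{-iy·ξ} f(y) dy`. -/
def FT (f : V2 → ℂ) (ξ : V2) : ℂ :=
  (2 * Real.pi : ℂ)⁻¹ * ∫ y : V2, Complex.exp (-Complex.I * ((inner ℝ y ξ : ℝ) : ℂ)) * f y

/-- Inverse Fourier transform on `ℝ²`. -/
def FTinv (f : V2 → ℂ) (x : V2) : ℂ :=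
  (2 * Real.pi : ℂ)⁻¹ * ∫ ξ : V2, Complex.exp (Complex.I * ((inner ℝ x ξ : ℝ) : ℂ)) * f ξ

/-- The `L²(ℝ²)` norm. -/
def L2N (f : V2 → ℂ) : ℝ := (eLpNorm f 2 volume).toReal

/-- The `L³(ℝ²)` norm. -/
def L3N (f : V2 → ℂ) : ℝ := (eLpNorm f 3 volume).toReal

/-- The `L^∞(ℝ²)` norm of a `ℂ³`-valued function. -/
def LinfN (f : V2 → Fin 3 → ℂ) : ℝ := (eLpNorm f ⊤ volume).toReal

/-- The function `ξ ↦ (1+|ξ|²)^{s/2} f̂(ξ)`, i.e. the Fourier side of `(1-Δ)^{s/2} f`. -/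
def sobFn (s : ℝ) (f : V2 → ℂ) : V2 → ℂ :=
  fun ξ => (((1 + ‖ξ‖ ^ 2) ^ (s / 2) : ℝ) : ℂ) * FT f ξ

/-- The function `x ↦ (1+|x|²)^{s/2} f(x)`. -/
def wFn (s : ℝ) (f : V2 → ℂ) : V2 → ℂ :=
  fun x => (((1 + ‖x‖ ^ 2) ^ (s / 2) : ℝ) : ℂ) * f x

/-- The `H^{s,0}(ℝ²)` norm (via the Fourier transform). -/
def sobNorm (s : ℝ) (f : V2 → ℂ) : ℝ := L2N (sobFn s f)

/-- The `H^{0,s}(ℝ²)` norm. -/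
def wNorm (s : ℝ) (f : V2 → ℂ) : ℝ := L2N (wFn s f)

/-- Membership in `H^{s,0}(ℝ²)`. -/
def MemSob (s : ℝ) (f : V2 → ℂ) : Prop := MemLp (sobFn s f) 2 volume

/-- Membership in `H^{0,s}(ℝ²)`. -/
def MemW (s : ℝ) (f : V2 → ℂ) : Prop := MemLp (wFn s f) 2 volume

/-- Componentwise `H^{s,0}` norm of a `ℂ³`-valued function. -/
def sobNormS (s : ℝ) (f : V2 → Fin 3 → ℂ) : ℝ := ∑ j, sobNorm s (fun x => f x j)

/-- Componentwise `H^{0,s}` norm of a `ℂ³`-valued function. -/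
def wNormS (s : ℝ) (f : V2 → Fin 3 → ℂ) : ℝ := ∑ j, wNorm s (fun x => f x j)

/-- Componentwise membership in `H^{s,0}`. -/
def MemSobS (s : ℝ) (f : V2 → Fin 3 → ℂ) : Prop := ∀ j, MemSob s (fun x => f x j)

/-- Componentwise membership in `H^{0,s}`. -/
def MemWS (s : ℝ) (f : V2 → Fin 3 → ℂ) : Prop := ∀ j, MemW s (fun x => f x j)

/-- The norm `‖f‖_{H^{s,0}} + ‖f‖_{H^{0,s}}`. -/
def HN (s : ℝ) (f : V2 → Fin 3 → ℂ) : ℝ := sobNormS s f + wNormS s f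

/-- The quadratic nonlinearity `F : ℂ³ → ℂ³` of the system. -/
def Fnl (l μ : Fin 3 → ℂ) (z : Fin 3 → ℂ) : Fin 3 → ℂ :=
  ![l 0 * (‖z 0‖ : ℂ) * z 0 + μ 0 * (starRingEnd ℂ) (z 1) * z 2,
    l 1 * (‖z 1‖ : ℂ) * z 1 + μ 1 * (starRingEnd ℂ) (z 0) * z 2,
    l 2 * (‖z 2‖ : ℂ) * z 2 + μ 2 * z 0 * z 1]

/-- The standard Hermitian inner product `⟨z,w⟩ = Σ z_j conj(w_j)` on `ℂ³`. -/
def innC3 (z w : Fin 3 → ℂ) : ℂ := ∑ j, z j * (starRingEnd ℂ) (w j)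

/-- Multiplication by the diagonal matrix `A = diag(κ₁,κ₂,κ₃)`. -/
def Amul (κ : Fin 3 → ℝ) (z : Fin 3 → ℂ) : Fin 3 → ℂ := fun j => (κ j : ℂ) * z j

/-- `ν_A(z) = sqrt(κ₁|z₁|² + κ₂|z₂|² + κ₃|z₃|²)`. -/
def nuA (κ : Fin 3 → ℝ) (z : Fin 3 → ℂ) : ℝ :=
  Real.sqrt (∑ j, κ j * ‖z j‖ ^ 2)

/-- The free propagator `exp(i t Δ/(2m))` (as a Fourier multiplier). -/
def prop1 (mass t : ℝ) (f : V2 → ℂ) : V2 → ℂ :=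
  FTinv fun ξ =>
    Complex.exp (-Complex.I * (t : ℂ) * ((‖ξ‖ ^ 2 : ℝ) : ℂ) / (2 * (mass : ℂ))) * FT f ξ

/-- The free propagator `U(t) = (exp(itΔ/(2m_j)))_{j=1,2,3}` for the system. -/
def Uprop (m : Fin 3 → ℝ) (t : ℝ) (f : V2 → Fin 3 → ℂ) : V2 → Fin 3 → ℂ :=
  fun x j => prop1 (m j) t (fun y => f y j) x

/-- The operator `(Gφ)(ξ) = (−i m_j φ̂_j(m_j ξ))_{j=1,2,3}`. -/
def Gop (m : Fin 3 → ℝ) (f : V2 → Fin 3 → ℂ) : V2 → Fin 3 → ℂ :=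
  fun ξ j => -Complex.I * ((m j : ℝ) : ℂ) * FT (fun y => f y j) ((m j) • ξ)

/-- The Laplacian on `ℝ²`. -/
def lap (f : V2 → ℂ) (x : V2) : ℂ :=
  ∑ i : Fin 2,
    iteratedFDeriv ℝ 2 f x ![EuclideanSpace.single i (1 : ℝ), EuclideanSpace.single i 1]

/-- `u` satisfies the system `i ∂_t u_j + (1/(2m_j)) Δ u_j = F_j(u)` at time `t`. -/
def SolEq (m : Fin 3 → ℝ) (l μ : Fin 3 → ℂ) (u : ℝ → V2 → Fin 3 → ℂ) (t : ℝ) : Prop :=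
  ∀ x : V2, ∀ j : Fin 3,
    Complex.I * deriv (fun τ => u τ x j) t
        + (1 / (2 * ((m j : ℝ) : ℂ))) * lap (fun y => u t y j) x
      = Fnl l μ (u t x) j

/-- `u` is a solution of the initial value problem on `[0,T]`, belonging to
`C([0,T]; H^{s,0} ∩ H^{0,s})`. -/
def IsSolOn (m : Fin 3 → ℝ) (l μ : Fin 3 → ℂ) (s : ℝ) (φ : V2 → Fin 3 → ℂ)
    (T : ℝ) (u : ℝ → V2 → Fin 3 → ℂ) : Prop :=
  (∀ x, u 0 x = φ x) ∧
  (∀ t ∈ Set.Icc (0 : ℝ) T, MemSobS s (u t) ∧ MemWS s (u t)) ∧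
  (∀ t₀ ∈ Set.Icc (0 : ℝ) T,
    Filter.Tendsto (fun t => HN s fun x j => u t x j - u t₀ x j)
      (nhdsWithin t₀ (Set.Icc 0 T)) (nhds 0)) ∧
  (∀ t ∈ Set.Ioo (0 : ℝ) T, SolEq m l μ u t)

/-- `u` is a global solution of the initial value problem, belonging to
`C([0,∞); H^{s,0} ∩ H^{0,s})`. -/
def IsGlobalSol (m : Fin 3 → ℝ) (l μ : Fin 3 → ℂ) (s : ℝ) (φ : V2 → Fin 3 → ℂ)
    (u : ℝ → V2 → Fin 3 → ℂ) : Prop :=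
  (∀ x, u 0 x = φ x) ∧
  (∀ t ∈ Set.Ici (0 : ℝ), MemSobS s (u t) ∧ MemWS s (u t)) ∧
  (∀ t₀ ∈ Set.Ici (0 : ℝ),
    Filter.Tendsto (fun t => HN s fun x j => u t x j - u t₀ x j)
      (nhdsWithin t₀ (Set.Ici 0)) (nhds 0)) ∧
  (∀ t ∈ Set.Ioi (0 : ℝ), SolEq m l μ u t)

/-- The norm `‖u‖_{X_T}`. -/
def XTnorm (m : Fin 3 → ℝ) (s γ T : ℝ) (u : ℝ → V2 → Fin 3 → ℂ) : ℝ :=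
  ⨆ t : Set.Icc (0 : ℝ) T,
    ((1 + (t : ℝ)) * LinfN (u (t : ℝ)) +
      (1 + (t : ℝ)) ^ (-(γ / 3)) *
        (sobNormS s (u (t : ℝ)) + wNormS s (Uprop m (-(t : ℝ)) (u (t : ℝ)))))

/-- `E_θ z = (e^{i m_j θ} z_j)_{j=1,2,3}`. -/
def Eop (m : Fin 3 → ℝ) (θ : ℝ) (z : Fin 3 → ℂ) : Fin 3 → ℂ :=
  fun j => Complex.exp (Complex.I * ((m j * θ : ℝ) : ℂ)) * z j

/-- `M(t)φ = (e^{i m_j |x|²/(2t)} φ_j)_{j=1,2,3}`. -/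
def Mop (m : Fin 3 → ℝ) (t : ℝ) (f : V2 → Fin 3 → ℂ) : V2 → Fin 3 → ℂ :=
  fun x j => Complex.exp (Complex.I * ((m j * ‖x‖ ^ 2 / (2 * t) : ℝ) : ℂ)) * f x j

/-- `(D(t)φ)(x) = t⁻¹ φ(x/t)`. -/
def Dop (t : ℝ) (f : V2 → Fin 3 → ℂ) : V2 → Fin 3 → ℂ :=
  fun x j => ((t : ℝ) : ℂ)⁻¹ * f (t⁻¹ • x) j

/-- The inverse `G⁻¹` of the operator `G`. -/
def Ginv (m : Fin 3 → ℝ) (f : V2 → Fin 3 → ℂ) : V2 → Fin 3 → ℂ :=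
  fun x j => FTinv (fun η => (Complex.I / ((m j : ℝ) : ℂ)) * f ((m j)⁻¹ • η) j) x

/-- `W(t) = G M(t) G⁻¹`. -/
def Wop (m : Fin 3 → ℝ) (t : ℝ) (f : V2 → Fin 3 → ℂ) : V2 → Fin 3 → ℂ :=
  Gop m (Mop m t (Ginv m f))

end

/-
The cubic terms contribute `κ_j λ_j |z_j|³` since `|z_j| z_j conj z_j = |z_j|³`. The quadratic
terms give `(κ₁μ₁ + κ₂μ₂) w̄ + κ₃μ₃ w` with `w = z₁z₂ conj z₃`; the coefficient condition turns
this into `κ₃ (v + conj v)` with `v = conj(μ₃ w)`, i.e. `2κ₃ Re v`, which is real.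
-/

open ComplexConjugate

lemma ofReal_norm_pow_three (w : ℂ) : ((‖w‖ ^ 3 : ℝ) : ℂ) = ‖w‖ * (w * conj w) := by
  rw [Complex.mul_conj']
  push_cast
  ring

lemma innC3_Fnl_Amul (l μ : Fin 3 → ℂ) (κ : Fin 3 → ℝ) (z : Fin 3 → ℂ) :
    innC3 (Fnl l μ z) (Amul κ z)
      = (∑ j, (κ j : ℂ) * l j * ((‖z j‖ ^ 3 : ℝ) : ℂ))
        + ((κ 0 * μ 0 + κ 1 * μ 1) * (conj (z 0 * z 1) * z 2)
          + κ 2 * μ 2 * (z 0 * z 1 * conj (z 2))) := by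
  simp only [innC3, Fnl, Amul, Fin.sum_univ_three, Matrix.cons_val_zero, Matrix.cons_val_one,
    Matrix.cons_val_two, Matrix.head_cons, Matrix.tail_cons, ofReal_norm_pow_three, map_mul,
    Complex.conj_ofReal]
  ring

lemma innC3_Fnl_Amul_of_coef {l μ : Fin 3 → ℂ} {κ : Fin 3 → ℝ}
    (hcoef : (κ 0 : ℂ) * μ 0 + (κ 1 : ℂ) * μ 1 = (κ 2 : ℂ) * conj (μ 2)) (z : Fin 3 → ℂ) :
    innC3 (Fnl l μ z) (Amul κ z)
      = (∑ j, (κ j : ℂ) * l j * ((‖z j‖ ^ 3 : ℝ) : ℂ))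
        + 2 * (κ 2 : ℂ) * (((conj (μ 2 * z 0 * z 1) * z 2).re : ℝ) : ℂ) := by
  rw [innC3_Fnl_Amul, hcoef, Complex.re_eq_add_conj]
  simp only [map_mul, Complex.conj_conj]
  ring

lemma im_sum_cubic_add_ofReal (l : Fin 3 → ℂ) (κ : Fin 3 → ℝ) (z : Fin 3 → ℂ) (r : ℝ) :
    ((∑ j, (κ j : ℂ) * l j * ((‖z j‖ ^ 3 : ℝ) : ℂ)) + 2 * (κ 2 : ℂ) * (r : ℂ)).im
      = ∑ j, κ j * (l j).im * ‖z j‖ ^ 3 := by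
  simp [Complex.im_sum, Complex.mul_im, -Complex.ofReal_pow]

theorem inner_product_identity_general
    (l μ : Fin 3 → ℂ) (κ : Fin 3 → ℝ)
    (hκ : ∀ j, 0 < κ j)
    (hcoef : (κ 0 : ℂ) * μ 0 + (κ 1 : ℂ) * μ 1 = (κ 2 : ℂ) * (starRingEnd ℂ) (μ 2)) :
    ∀ z : Fin 3 → ℂ,
      innC3 (Fnl l μ z) (Amul κ z)
          = (∑ j, (κ j : ℂ) * l j * ((‖z j‖ ^ 3 : ℝ) : ℂ))
            + 2 * (κ 2 : ℂ) * ((((starRingEnd ℂ) (μ 2 * z 0 * z 1) * z 2).re : ℝ) : ℂ) ∧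
      (innC3 (Fnl l μ z) (Amul κ z)).im = ∑ j, κ j * (l j).im * ‖z j‖ ^ 3 ∧
      ((∀ j, (l j).im ≤ 0) → (innC3 (Fnl l μ z) (Amul κ z)).im ≤ 0) := by
  intro z
  have hid := innC3_Fnl_Amul_of_coef (l := l) hcoef z
  have him : (innC3 (Fnl l μ z) (Amul κ z)).im = ∑ j, κ j * (l j).im * ‖z j‖ ^ 3 := by
    rw [hid, im_sum_cubic_add_ofReal]
  refine ⟨hid, him, fun hneg => him ▸ Finset.sum_nonpos fun j _ => ?_⟩
  exact mul_nonpos_of_nonpos_of_nonneg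
    (mul_nonpos_of_nonneg_of_nonpos (hκ j).le (hneg j)) (by positivity)

/-- the identity for `⟨F(z), Az⟩` and the sign of its imaginary part. -/
theorem inner_product_identity
    (l μ : Fin 3 → ℂ) (κ : Fin 3 → ℝ)
    (hl : ∀ j, l j ≠ 0) (hmu : ∀ j, μ j ≠ 0)
    (hκ : ∀ j, 0 < κ j)
    (hcoef : (κ 0 : ℂ) * μ 0 + (κ 1 : ℂ) * μ 1 = (κ 2 : ℂ) * (starRingEnd ℂ) (μ 2)) :
    ∀ z : Fin 3 → ℂ,
      innC3 (Fnl l μ z) (Amul κ z)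
          = (∑ j, (κ j : ℂ) * l j * ((‖z j‖ ^ 3 : ℝ) : ℂ))
            + 2 * (κ 2 : ℂ) * ((((starRingEnd ℂ) (μ 2 * z 0 * z 1) * z 2).re : ℝ) : ℂ) ∧
      (innC3 (Fnl l μ z) (Amul κ z)).im = ∑ j, κ j * (l j).im * ‖z j‖ ^ 3 ∧
      ((∀ j, (l j).im ≤ 0) → (innC3 (Fnl l μ z) (Amul κ z)).im ≤ 0) :=
  inner_product_identity_general l μ κ hκ hcoef
end

section
/- Let γ ∈ [0,1] and s > 1 + 2γ. There exists a constant C such that ‖G (M(t) − 1) ψ‖_{L^∞} ≤ C t^{−γ} ‖ψ‖_{H^{0,s}} for all t ≥ 1 and all ℂ³-valued ψ ∈ H^{0,s}(ℝ²), where M(t)ψ = (e^{i m_j |x|²/(2t)} ψ_j)_{j=1,2,3}. -/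
open MeasureTheory Filter Complex

/-!
The `j`-th component of `G (M(t) - 1) ψ` at `ξ` is `-i m_j` times the Fourier transform of
`(e^{i m_j |y|²/(2t)} - 1) ψ_j` at `m_j ξ`, hence bounded by `|m_j| / (2π)` times the `L¹` norm of
that function. Interpolating `|e^{iθ} - 1| ≤ min (|θ|, 2)` gives `|e^{iθ} - 1| ≤ 2^{1-γ} |θ|^γ`, and
`|θ| ≤ |m_j| ⟨y⟩² / t`, so this `L¹` norm is at most a constant times `t^{-γ} ∫ ⟨y⟩^{2γ} |ψ_j|`.
Cauchy–Schwarz against `⟨y⟩^{2γ-s}`, which is square integrable on `ℝ²` exactly when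
`s > 1 + 2γ`, bounds the last integral by `‖ψ_j‖_{H^{0,s}}`.
-/

open Real in
theorem le_rpow_mul_rpow_one_sub {a b c γ : ℝ} (ha : 0 ≤ a) (hab : a ≤ b) (hac : a ≤ c)
    (hγ0 : 0 ≤ γ) (hγ1 : γ ≤ 1) : a ≤ b ^ γ * c ^ (1 - γ) := by
  calc a = a ^ γ * a ^ (1 - γ) := by
        rw [← rpow_add' ha (by norm_num), add_sub_cancel, rpow_one]
    _ ≤ b ^ γ * c ^ (1 - γ) := by
        have : 0 ≤ b := ha.trans hab
        gcongr

theorem norm_exp_I_mul_ofReal_sub_one_le_rpow (x : ℝ) {γ : ℝ} (hγ0 : 0 ≤ γ) (hγ1 : γ ≤ 1) :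
    ‖Complex.exp (Complex.I * (x : ℂ)) - 1‖ ≤ 2 ^ (1 - γ) * |x| ^ γ := by
  rw [mul_comm ((2 : ℝ) ^ (1 - γ))]
  refine le_rpow_mul_rpow_one_sub (norm_nonneg _) ?_ ?_ hγ0 hγ1
  · exact (Real.norm_eq_abs x) ▸ Real.norm_exp_I_mul_ofReal_sub_one_le
  · calc _ ≤ ‖Complex.exp (Complex.I * (x : ℂ))‖ + ‖(1 : ℂ)‖ := norm_sub_le _ _
      _ = 2 := by rw [Complex.norm_exp_I_mul_ofReal]; norm_num

theorem norm_exp_chirp_sub_one_le {E : Type*} [NormedAddCommGroup E] {μ t γ : ℝ} (ht : 0 < t)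
    (hγ0 : 0 ≤ γ) (hγ1 : γ ≤ 1) (y : E) :
    ‖Complex.exp (Complex.I * ((μ * ‖y‖ ^ 2 / (2 * t) : ℝ) : ℂ)) - 1‖
      ≤ 2 ^ (1 - γ) * |μ| ^ γ * t ^ (-γ) * (1 + ‖y‖ ^ 2) ^ γ := by
  have hphase : |μ * ‖y‖ ^ 2 / (2 * t)| ≤ |μ| * t⁻¹ * (1 + ‖y‖ ^ 2) := by
    rw [abs_div, abs_mul, abs_of_nonneg (by positivity : (0 : ℝ) ≤ ‖y‖ ^ 2),
      abs_of_pos (by positivity : 0 < 2 * t), div_le_iff₀ (by positivity)]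
    have : 0 ≤ |μ| * ‖y‖ ^ 2 := by positivity
    field_simp
    nlinarith [abs_nonneg μ]
  calc _ ≤ 2 ^ (1 - γ) * |μ * ‖y‖ ^ 2 / (2 * t)| ^ γ :=
        norm_exp_I_mul_ofReal_sub_one_le_rpow _ hγ0 hγ1
    _ ≤ 2 ^ (1 - γ) * (|μ| * t⁻¹ * (1 + ‖y‖ ^ 2)) ^ γ := by gcongr
    _ = _ := by
        rw [Real.mul_rpow (by positivity) (by positivity),
          Real.mul_rpow (by positivity) (by positivity), Real.inv_rpow ht.le,
          ← Real.rpow_neg ht.le]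
        ring

theorem memLp_two_one_add_norm_sq_rpow {E : Type*} [NormedAddCommGroup E] [InnerProductSpace ℝ E]
    [FiniteDimensional ℝ E] [MeasurableSpace E] [BorelSpace E] (μ : Measure E)
    [μ.IsAddHaarMeasure] {r : ℝ} (hr : (Module.finrank ℝ E : ℝ) < -4 * r) :
    MemLp (fun y : E => (1 + ‖y‖ ^ 2) ^ r) 2 μ := by
  have hcont : Continuous fun y : E => (1 + ‖y‖ ^ 2) ^ r :=
    Continuous.rpow_const (by fun_prop) fun y => Or.inl (by positivity)
  rw [memLp_two_iff_integrable_sq hcont.aestronglyMeasurable]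
  refine (integrable_rpow_neg_one_add_norm_sq (μ := μ) hr).congr (ae_of_all _ fun y => ?_)
  dsimp only
  rw [← Real.rpow_mul_natCast (by positivity)]
  congr 1
  push_cast
  ring

section CauchySchwarz

variable {α E F : Type*} [MeasurableSpace α] {μ : Measure α} [NormedAddCommGroup E]
  [NormedAddCommGroup F] {f : α → E} {g : α → F}

theorem MeasureTheory.MemLp.integrable_norm_mul_norm (hf : MemLp f 2 μ) (hg : MemLp g 2 μ) :
    Integrable (fun x => ‖f x‖ * ‖g x‖) μ :=
  hf.norm.integrable_mul hg.norm

theorem integral_norm_mul_norm_le_eLpNorm_two (hf : MemLp f 2 μ) (hg : MemLp g 2 μ) :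
    ∫ x, ‖f x‖ * ‖g x‖ ∂μ ≤ (eLpNorm f 2 μ).toReal * (eLpNorm g 2 μ).toReal := by
  have h := integral_mul_norm_le_Lp_mul_Lq (p := 2) (q := 2) Real.HolderConjugate.two_two
    (by simpa using hf.norm) (by simpa using hg.norm)
  simp only [norm_norm] at h
  rw [hf.eLpNorm_eq_integral_rpow_norm two_ne_zero ENNReal.ofNat_ne_top,
    hg.eLpNorm_eq_integral_rpow_norm two_ne_zero ENNReal.ofNat_ne_top,
    ENNReal.toReal_ofReal (by positivity), ENNReal.toReal_ofReal (by positivity)]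
  simpa using h

end CauchySchwarz

theorem norm_Mop_sub_le (m : Fin 3 → ℝ) {t γ : ℝ} (ht : 0 < t) (hγ0 : 0 ≤ γ) (hγ1 : γ ≤ 1)
    (ψ : V2 → Fin 3 → ℂ) (y : V2) (j : Fin 3) :
    ‖Mop m t ψ y j - ψ y j‖
      ≤ 2 ^ (1 - γ) * |m j| ^ γ * t ^ (-γ) * ((1 + ‖y‖ ^ 2) ^ γ * ‖ψ y j‖) := by
  have hfactor : Mop m t ψ y j - ψ y j
      = (Complex.exp (Complex.I * ((m j * ‖y‖ ^ 2 / (2 * t) : ℝ) : ℂ)) - 1) * ψ y j := by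
    simp only [Mop]; ring
  rw [hfactor, norm_mul, ← mul_assoc]
  gcongr
  exact norm_exp_chirp_sub_one_le ht hγ0 hγ1 y

theorem norm_FT_le (f : V2 → ℂ) (ξ : V2) : ‖FT f ξ‖ ≤ (2 * Real.pi)⁻¹ * ∫ y, ‖f y‖ := by
  calc ‖FT f ξ‖
      = (2 * Real.pi)⁻¹ * ‖∫ y, Complex.exp (-Complex.I * ((inner ℝ y ξ : ℝ) : ℂ)) * f y‖ := by
        simp [FT, abs_of_pos Real.pi_pos]
    _ ≤ (2 * Real.pi)⁻¹ * ∫ y, ‖Complex.exp (-Complex.I * ((inner ℝ y ξ : ℝ) : ℂ)) * f y‖ := by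
        gcongr; exact norm_integral_le_integral_norm _
    _ = (2 * Real.pi)⁻¹ * ∫ y, ‖f y‖ := by simp [Complex.norm_exp]

theorem norm_Gop_le (m : Fin 3 → ℝ) (f : V2 → Fin 3 → ℂ) (ξ : V2) (j : Fin 3) :
    ‖Gop m f ξ j‖ ≤ |m j| * ((2 * Real.pi)⁻¹ * ∫ y, ‖f y j‖) := by
  calc ‖Gop m f ξ j‖ = |m j| * ‖FT (fun y => f y j) (m j • ξ)‖ := by simp [Gop]
    _ ≤ _ := by gcongr; exact norm_FT_le _ _

theorem LinfN_le_of_forall_norm_le {f : V2 → Fin 3 → ℂ} {B : ℝ} (hB : 0 ≤ B)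
    (h : ∀ x j, ‖f x j‖ ≤ B) : LinfN f ≤ B := by
  have hsup : eLpNorm f ⊤ volume ≤ ENNReal.ofReal B := by
    rw [eLpNorm_exponent_top]
    exact eLpNormEssSup_le_of_ae_bound (ae_of_all _ fun x => (pi_norm_le_iff_of_nonneg hB).2 (h x))
  simpa [LinfN, hB] using ENNReal.toReal_mono ENNReal.ofReal_ne_top hsup

theorem wNorm_nonneg (s : ℝ) (f : V2 → ℂ) : 0 ≤ wNorm s f := ENNReal.toReal_nonneg

theorem wNormS_nonneg (s : ℝ) (f : V2 → Fin 3 → ℂ) : 0 ≤ wNormS s f :=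
  Finset.sum_nonneg fun _ _ => wNorm_nonneg s _

theorem exists_integral_rpow_mul_norm_le_wNorm {γ s : ℝ} (hs : 1 + 2 * γ < s) :
    ∃ C, 0 ≤ C ∧ ∀ f : V2 → ℂ, MemW s f →
      Integrable (fun y => (1 + ‖y‖ ^ 2) ^ γ * ‖f y‖) ∧
        ∫ y, (1 + ‖y‖ ^ 2) ^ γ * ‖f y‖ ≤ C * wNorm s f := by
  set w : V2 → ℝ := fun y => (1 + ‖y‖ ^ 2) ^ (γ - s / 2)
  have hw : MemLp w 2 volume := memLp_two_one_add_norm_sq_rpow volume (by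
    rw [finrank_euclideanSpace_fin]; push_cast; linarith)
  have hsplit : ∀ f : V2 → ℂ, (fun y => (1 + ‖y‖ ^ 2) ^ γ * ‖f y‖)
      = fun y => ‖w y‖ * ‖wFn s f y‖ := fun f => funext fun y => by
    have hpos : (0 : ℝ) < 1 + ‖y‖ ^ 2 := by positivity
    simp only [w, wFn, norm_mul, Complex.norm_real, Real.norm_eq_abs,
      abs_of_pos (Real.rpow_pos_of_pos hpos _)]
    rw [← mul_assoc, ← Real.rpow_add hpos, sub_add_cancel]
  refine ⟨(eLpNorm w 2 volume).toReal, ENNReal.toReal_nonneg, fun f hf => ?_⟩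
  rw [hsplit]
  exact ⟨hw.integrable_norm_mul_norm hf, integral_norm_mul_norm_le_eLpNorm_two hw hf⟩

theorem GM_minus_one_estimate_general
    (m : Fin 3 → ℝ)
    (γ s : ℝ) (hγ0 : 0 ≤ γ) (hγ1 : γ ≤ 1) (hs : 1 + 2 * γ < s) :
    ∃ C : ℝ, ∀ t : ℝ, 1 ≤ t → ∀ ψ : V2 → Fin 3 → ℂ, MemWS s ψ →
      LinfN (Gop m (fun x j => Mop m t ψ x j - ψ x j))
        ≤ C * t ^ (-γ) * wNormS s ψ := by
  obtain ⟨K, hK, hweighted⟩ := exists_integral_rpow_mul_norm_le_wNorm hs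
  set A : Fin 3 → ℝ := fun j => |m j| * (2 * Real.pi)⁻¹ * (2 ^ (1 - γ) * |m j| ^ γ) * K
  have hA : ∀ j, 0 ≤ A j := fun j => by positivity
  refine ⟨∑ j, A j, fun t ht ψ hψ => ?_⟩
  have ht0 : 0 < t := by linarith
  refine LinfN_le_of_forall_norm_le (by positivity [wNormS_nonneg s ψ]) fun ξ j => ?_
  obtain ⟨hint, hle⟩ := hweighted _ (hψ j)
  calc ‖Gop m (fun x j => Mop m t ψ x j - ψ x j) ξ j‖
      ≤ |m j| * ((2 * Real.pi)⁻¹ * ∫ y, ‖Mop m t ψ y j - ψ y j‖) := norm_Gop_le _ _ _ _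
    _ ≤ |m j| * ((2 * Real.pi)⁻¹ * ∫ y, 2 ^ (1 - γ) * |m j| ^ γ * t ^ (-γ) *
          ((1 + ‖y‖ ^ 2) ^ γ * ‖ψ y j‖)) := by
        gcongr |m j| * (_ * ?_)
        exact integral_mono_of_nonneg (ae_of_all _ fun y => norm_nonneg _) (hint.const_mul _)
          (ae_of_all _ fun y => norm_Mop_sub_le m ht0 hγ0 hγ1 ψ y j)
    _ ≤ A j * t ^ (-γ) * wNorm s (fun x => ψ x j) := by
        rw [integral_const_mul]
        calc _ ≤ |m j| * ((2 * Real.pi)⁻¹ * (2 ^ (1 - γ) * |m j| ^ γ * t ^ (-γ) *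
              (K * wNorm s (fun x => ψ x j)))) := by gcongr
          _ = _ := by ring
    _ ≤ (∑ j, A j) * t ^ (-γ) * wNormS s ψ := by
        gcongr
        · exact wNorm_nonneg _ _
        · exact Finset.single_le_sum (fun i _ => hA i) (Finset.mem_univ j)
        · exact Finset.single_le_sum (f := fun i => wNorm s (fun x => ψ x i))
            (fun i _ => wNorm_nonneg _ _) (Finset.mem_univ j)

/-- `‖G(M(t) − 1)ψ‖_{L^∞} ≤ C t^{−γ} ‖ψ‖_{H^{0,s}}`. -/
theorem GM_minus_one_estimate
    (m : Fin 3 → ℝ) (hm : ∀ j, m j ≠ 0)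
    (γ s : ℝ) (hγ0 : 0 ≤ γ) (hγ1 : γ ≤ 1) (hs : 1 + 2 * γ < s) :
    ∃ C : ℝ, ∀ t : ℝ, 1 ≤ t → ∀ ψ : V2 → Fin 3 → ℂ, MemWS s ψ →
      LinfN (Gop m (fun x j => Mop m t ψ x j - ψ x j))
        ≤ C * t ^ (-γ) * wNormS s ψ :=
  GM_minus_one_estimate_general m γ s hγ0 hγ1 hs
end

section
/- Let c > 0, K ≥ 0, a > 0, and let Φ : [2,∞) → [0,∞) be continuously differentiable and satisfy Φ'(t) ≤ −(2c/t) Φ(t)^{3/2} + K t^{−1−a} for all t ≥ 2. Then there exists a constant C (depending on c, K, a, and Φ(2)) such that Φ(t) ≤ C / (log t)² for all t ≥ 2. -/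
open MeasureTheory Filter Complex

/-! With `L = log t` and `B = 1/c² + 27K/a³`, the weighted quantity `L³ Φ(t) - B L` is
nonincreasing. Its derivative is `L³ Φ' + 3 L² Φ / t - B / t`; the damping term
`-2c L³ Φ^{3/2} / t` absorbs `3 L² Φ / t` up to `1/(c² t)` (Young's inequality), and the forcing
term `K L³ t^{-1-a}` is at most `27 K / (a³ t)` because `L ≤ (3/a) t^{a/3}`. Hence
`L³ Φ(t) = O(L)`. -/

open Set Real

lemma antitoneOn_Ici_of_hasDerivWithinAt_nonpos {f f' : ℝ → ℝ} {t₀ : ℝ}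
    (hf : ∀ t ∈ Ici t₀, HasDerivWithinAt f (f' t) (Ici t₀) t)
    (hf' : ∀ t ∈ Ici t₀, f' t ≤ 0) : AntitoneOn f (Ici t₀) := by
  refine antitoneOn_of_hasDerivWithinAt_nonpos (f' := f') (convex_Ici t₀)
    (fun t ht => (hf t ht).continuousWithinAt) (fun t ht => ?_) (fun t ht => ?_)
  all_goals rw [interior_Ici] at ht
  · exact ((hf t (Ioi_subset_Ici_self ht)).hasDerivAt (Ici_mem_nhds ht)).hasDerivWithinAt
  · exact hf' t (Ioi_subset_Ici_self ht)

lemma three_mul_sq_sub_le_inv_sq {c y : ℝ} (hc : 0 < c) (hy : 0 ≤ y) :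
    3 * y ^ 2 - 2 * c * y ^ 3 ≤ 1 / c ^ 2 := by
  rw [le_div_iff₀ (by positivity)]
  -- `1 - c² (3 y² - 2 c y³) = (c y - 1)² (2 c y + 1)`
  nlinarith [mul_nonneg (sq_nonneg (c * y - 1)) (by positivity : 0 ≤ 2 * c * y + 1)]

lemma three_mul_sq_mul_sub_le_inv_sq {c L x : ℝ} (hc : 0 < c) (hL : 0 ≤ L) (hx : 0 ≤ x) :
    3 * L ^ 2 * x - 2 * c * L ^ 3 * x ^ ((3 : ℝ) / 2) ≤ 1 / c ^ 2 := by
  have hsq : x = √x ^ 2 := (sq_sqrt hx).symm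
  have hcube : x ^ ((3 : ℝ) / 2) = √x ^ 3 := by
    rw [rpow_div_two_eq_sqrt _ hx]; exact_mod_cast rpow_natCast (√x) 3
  calc 3 * L ^ 2 * x - 2 * c * L ^ 3 * x ^ ((3 : ℝ) / 2)
      = 3 * (L * √x) ^ 2 - 2 * c * (L * √x) ^ 3 := by rw [hcube]; nth_rw 1 [hsq]; ring
    _ ≤ 1 / c ^ 2 := three_mul_sq_sub_le_inv_sq hc (by positivity)

lemma log_pow_three_mul_rpow_le {a t : ℝ} (ha : 0 < a) (ht : 1 ≤ t) :
    Real.log t ^ 3 * t ^ (-1 - a) ≤ 27 / a ^ 3 * t⁻¹ := by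
  have ht0 : 0 < t := by linarith
  have hlog : Real.log t ≤ t ^ (a / 3) / (a / 3) := log_le_rpow_div ht0.le (by positivity)
  have hcube : (t ^ (a / 3) / (a / 3)) ^ 3 = 27 / a ^ 3 * t ^ a := by
    rw [div_pow, ← rpow_natCast (t ^ (a / 3)), ← rpow_mul ht0.le]
    field_simp; norm_num
  calc Real.log t ^ 3 * t ^ (-1 - a)
      ≤ 27 / a ^ 3 * t ^ a * t ^ (-1 - a) := by
        rw [← hcube]; gcongr; exact log_nonneg ht
    _ = 27 / a ^ 3 * t⁻¹ := by
        rw [mul_assoc, ← rpow_add ht0, show a + (-1 - a) = -1 by ring, rpow_neg_one]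

section WeightedEnergy

variable {c K a t₀ : ℝ} {Φ Φ' : ℝ → ℝ}

lemma hasDerivWithinAt_log_pow_three_mul_sub {B t : ℝ} (ht : t ≠ 0)
    (hΦ : HasDerivWithinAt Φ (Φ' t) (Ici t₀) t) :
    HasDerivWithinAt (fun s => Real.log s ^ 3 * Φ s - B * Real.log s)
      (3 * Real.log t ^ 2 * t⁻¹ * Φ t + Real.log t ^ 3 * Φ' t - B * t⁻¹) (Ici t₀) t := by
  have hlog : HasDerivAt Real.log t⁻¹ t := hasDerivAt_log ht
  have hcube : HasDerivAt (fun s => Real.log s ^ 3) (3 * Real.log t ^ 2 * t⁻¹) t := by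
    simpa using hlog.fun_pow 3
  exact (hcube.hasDerivWithinAt.mul hΦ).sub (hlog.const_mul B).hasDerivWithinAt

lemma log_pow_three_mul_deriv_le (hc : 0 < c) (hK : 0 ≤ K) (ha : 0 < a) {t : ℝ} (ht : 1 ≤ t)
    (hΦ : 0 ≤ Φ t)
    (hineq : Φ' t ≤ -(2 * c / t) * Φ t ^ ((3 : ℝ) / 2) + K * t ^ (-1 - a)) :
    3 * Real.log t ^ 2 * t⁻¹ * Φ t + Real.log t ^ 3 * Φ' t
      ≤ (1 / c ^ 2 + 27 * K / a ^ 3) * t⁻¹ := by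
  have hL : 0 ≤ Real.log t := log_nonneg ht
  have ht0 : 0 < t := by linarith
  have hdamp := three_mul_sq_mul_sub_le_inv_sq hc hL hΦ
  have hforce := log_pow_three_mul_rpow_le ha ht
  calc 3 * Real.log t ^ 2 * t⁻¹ * Φ t + Real.log t ^ 3 * Φ' t
      ≤ 3 * Real.log t ^ 2 * t⁻¹ * Φ t
          + Real.log t ^ 3 * (-(2 * c / t) * Φ t ^ ((3 : ℝ) / 2) + K * t ^ (-1 - a)) := by
        gcongr
    _ = (3 * Real.log t ^ 2 * Φ t - 2 * c * Real.log t ^ 3 * Φ t ^ ((3 : ℝ) / 2)) * t⁻¹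
          + K * (Real.log t ^ 3 * t ^ (-1 - a)) := by
        field_simp
        ring
    _ ≤ 1 / c ^ 2 * t⁻¹ + K * (27 / a ^ 3 * t⁻¹) := by gcongr
    _ = (1 / c ^ 2 + 27 * K / a ^ 3) * t⁻¹ := by ring

lemma antitoneOn_log_pow_three_mul_sub (hc : 0 < c) (hK : 0 ≤ K) (ha : 0 < a) (ht₀ : 1 ≤ t₀)
    (hΦ0 : ∀ t, t₀ ≤ t → 0 ≤ Φ t)
    (hderiv : ∀ t ∈ Ici t₀, HasDerivWithinAt Φ (Φ' t) (Ici t₀) t)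
    (hineq : ∀ t, t₀ ≤ t → Φ' t ≤ -(2 * c / t) * Φ t ^ ((3 : ℝ) / 2) + K * t ^ (-1 - a)) :
    AntitoneOn (fun t => Real.log t ^ 3 * Φ t - (1 / c ^ 2 + 27 * K / a ^ 3) * Real.log t)
      (Ici t₀) := by
  refine antitoneOn_Ici_of_hasDerivWithinAt_nonpos
    (fun t ht => hasDerivWithinAt_log_pow_three_mul_sub
      (by linarith [mem_Ici.1 ht] : (0 : ℝ) < t).ne' (hderiv t ht)) (fun t ht => ?_)
  have ht1 : 1 ≤ t := ht₀.trans ht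
  linarith [log_pow_three_mul_deriv_le hc hK ha ht1 (hΦ0 t ht) (hineq t ht)]

end WeightedEnergy

theorem ode_log_decay_general
    (c K a : ℝ) (hc : 0 < c) (hK : 0 ≤ K) (ha : 0 < a)
    (Φ Φ' : ℝ → ℝ)
    (hΦ0 : ∀ t : ℝ, 2 ≤ t → 0 ≤ Φ t)
    (hderiv : ∀ t ∈ Set.Ici (2 : ℝ), HasDerivWithinAt Φ (Φ' t) (Set.Ici 2) t)
    (hineq : ∀ t : ℝ, 2 ≤ t →
      Φ' t ≤ -(2 * c / t) * Φ t ^ ((3 : ℝ) / 2) + K * t ^ (-1 - a)) :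
    ∃ C : ℝ, ∀ t : ℝ, 2 ≤ t → Φ t ≤ C / Real.log t ^ 2 := by
  set B := 1 / c ^ 2 + 27 * K / a ^ 3
  set A := Real.log 2 ^ 3 * Φ 2 - B * Real.log 2
  have hanti := antitoneOn_log_pow_three_mul_sub hc hK ha one_le_two hΦ0 hderiv hineq
  refine ⟨|A| / Real.log 2 + B, fun t ht => ?_⟩
  have hlog2 : 0 < Real.log 2 := log_pos one_lt_two
  have hL2 : Real.log 2 ≤ Real.log t := log_le_log two_pos ht
  have hL : 0 < Real.log t := hlog2.trans_le hL2
  have hdecay : Real.log t ^ 3 * Φ t - B * Real.log t ≤ A := hanti self_mem_Ici ht ht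
  have hA : A ≤ |A| / Real.log 2 * Real.log t := by
    rw [div_mul_eq_mul_div, le_div_iff₀ hlog2]
    nlinarith [le_abs_self A, abs_nonneg A]
  rw [le_div_iff₀ (by positivity), ← mul_le_mul_iff_left₀ hL]
  nlinarith

/-- the ODE comparison lemma giving `Φ(t) ≤ C/(log t)²`. -/
theorem ode_log_decay
    (c K a : ℝ) (hc : 0 < c) (hK : 0 ≤ K) (ha : 0 < a)
    (Φ Φ' : ℝ → ℝ)
    (hΦ0 : ∀ t : ℝ, 2 ≤ t → 0 ≤ Φ t)
    (hderiv : ∀ t ∈ Set.Ici (2 : ℝ), HasDerivWithinAt Φ (Φ' t) (Set.Ici 2) t)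
    (hcont : ContinuousOn Φ' (Set.Ici 2))
    (hineq : ∀ t : ℝ, 2 ≤ t →
      Φ' t ≤ -(2 * c / t) * Φ t ^ ((3 : ℝ) / 2) + K * t ^ (-1 - a)) :
    ∃ C : ℝ, ∀ t : ℝ, 2 ≤ t → Φ t ≤ C / Real.log t ^ 2 :=
  ode_log_decay_general c K a hc hK ha Φ Φ' hΦ0 hderiv hineq
end
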